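/- arXiv:1806.07931 — 2 statements merged into one kernel-verified Lean document; each statement's English description precedes it below -/
import Mathlib

section
/- Let φ : I → R be a lower semicontinuous pseudoconvex function (with respect to the lower Dini derivative) on an interval I ⊆ R, with nonempty set Î of global minimizers. Then φ is constant on Î, strictly monotone increasing on I₊ = {t ∈ I : t ≥ s for all s ∈ Î}, and strictly monotone decreasing on I₋ = {t ∈ I : t ≤ s for all s ∈ Î}. -/
open Filter Set

/-- Lower Dini directional derivative of a function of one real variable. -/
noncomputable def dini (φ : ℝ → ℝ) (s u : ℝ) : ℝ :=
  liminf (fun h : ℝ => (φ (s + h * u) - φ s) / h) (nhdsWithin 0 (Ioi 0))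

/-- Pseudoconvexity w.r.t. the lower Dini derivative, one variable. -/
def PseudoconvexOn (φ : ℝ → ℝ) (I : Set ℝ) : Prop :=
  ∀ s ∈ I, ∀ t ∈ I, φ t < φ s → dini φ s (t - s) < 0

/-- A direction `u` is admissible at `s` relative to `I`. -/
def Admissible (I : Set ℝ) (s u : ℝ) : Prop :=
  ∃ δ > 0, ∀ h ∈ Ioo (0:ℝ) δ, s + h * u ∈ I

/-- `s` is a stationary point of `φ` relative to `I`. -/
def Stationary (φ : ℝ → ℝ) (I : Set ℝ) (s : ℝ) : Prop :=
  ∀ u : ℝ, Admissible I s u → 0 ≤ dini φ s u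

/-- The set of global minimizers of `φ` over `I`. -/
def ArgminSet (φ : ℝ → ℝ) (I : Set ℝ) : Set ℝ := {t ∈ I | ∀ s ∈ I, φ t ≤ φ s}

/-!
A negative lower Dini derivative at `s` towards `t` yields points arbitrarily close to `s`, on the
side of `t`, with smaller values. With lower semicontinuity this makes `φ` quasiconvex. For
`t₁ < t₂` to the right of a minimizer `a`, pseudoconvexity at `t₂` towards `a` gives `z ∈ (t₁, t₂)`
with `φ z < φ t₂`, and quasiconvexity on `[a, z]` gives `φ t₁ ≤ φ z`; the left side is symmetric.
-/

open Topology

theorem frequently_lt_of_dini_neg {φ : ℝ → ℝ} {s u : ℝ} (hd : dini φ s u < 0) :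
    ∃ᶠ h in 𝓝[>] (0 : ℝ), φ (s + h * u) < φ s := by
  by_cases hcob : IsCoboundedUnder (· ≥ ·) (𝓝[>] (0 : ℝ)) fun h ↦ (φ (s + h * u) - φ s) / h
  · refine ((frequently_lt_of_liminf_lt hcob hd).and_eventually self_mem_nhdsWithin).mono ?_
    rintro h ⟨hneg, hpos : 0 < h⟩
    exact sub_neg.1 ((div_neg_iff.1 hneg).resolve_left fun h' ↦ h'.2.not_gt hpos).1
  · -- the liminf is then `sSup` of a set unbounded above, which is `0`
    have hunbdd : ¬BddAbove {a | ∀ᶠ n in 𝓝[>] (0 : ℝ), a ≤ (φ (s + n * u) - φ s) / n} :=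
      fun ⟨b, hb⟩ ↦ hcob ⟨b, fun a ha ↦ hb ha⟩
    rw [dini, liminf_eq, Real.sSup_of_not_bddAbove hunbdd] at hd
    exact absurd hd (lt_irrefl 0)

section Pseudoconvex

variable {φ : ℝ → ℝ} {I : Set ℝ} {s t c : ℝ}

theorem PseudoconvexOn.exists_mem_Ioo_right_lt (hpc : PseudoconvexOn φ I) (hs : s ∈ I)
    (ht : t ∈ I) (hst : s < t) (hφ : φ t < φ s) (hc : s < c) :
    ∃ z ∈ Ioo s c, φ z < φ s := by
  have hδ : 0 < (c - s) / (t - s) := div_pos (sub_pos.2 hc) (sub_pos.2 hst)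
  obtain ⟨h, hlt, h0, hhδ⟩ :=
    ((frequently_lt_of_dini_neg (hpc s hs t ht hφ)).and_eventually (Ioo_mem_nhdsGT hδ)).exists
  have hstep : h * (t - s) < c - s := (lt_div_iff₀ (sub_pos.2 hst)).1 hhδ
  refine ⟨s + h * (t - s), ⟨lt_add_of_pos_right s (mul_pos h0 (sub_pos.2 hst)), ?_⟩, hlt⟩
  linarith

theorem PseudoconvexOn.exists_mem_Ioo_left_lt (hpc : PseudoconvexOn φ I) (hs : s ∈ I)
    (ht : t ∈ I) (hts : t < s) (hφ : φ t < φ s) (hc : c < s) :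
    ∃ z ∈ Ioo c s, φ z < φ s := by
  have hδ : 0 < (s - c) / (s - t) := div_pos (sub_pos.2 hc) (sub_pos.2 hts)
  obtain ⟨h, hlt, h0, hhδ⟩ :=
    ((frequently_lt_of_dini_neg (hpc s hs t ht hφ)).and_eventually (Ioo_mem_nhdsGT hδ)).exists
  have hstep : h * (s - t) < s - c := (lt_div_iff₀ (sub_pos.2 hts)).1 hhδ
  have hpos : 0 < h * (s - t) := mul_pos h0 (sub_pos.2 hts)
  refine ⟨s + h * (t - s), ⟨?_, ?_⟩, hlt⟩ <;> nlinarith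

/-- If `φ t, φ s ≤ r < φ x` with `t < x < s`, a minimizer of `φ` on a small interval around `x`
would be a point where pseudoconvexity, aimed at `t` or `s`, finds a smaller value nearby. -/
theorem PseudoconvexOn.quasiconvexOn (hI : I.OrdConnected) (hlsc : LowerSemicontinuousOn φ I)
    (hpc : PseudoconvexOn φ I) : QuasiconvexOn ℝ I φ := by
  intro r
  rw [convex_iff_ordConnected]
  refine ⟨fun t ht s hs x hx ↦ ⟨hI.out ht.1 hs.1 hx, ?_⟩⟩
  rcases hx.1.eq_or_lt with rfl | htx
  · exact ht.2
  rcases hx.2.eq_or_lt with rfl | hxs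
  · exact hs.2
  by_contra! hrx
  have hIoo : Ioo t s ⊆ I := Ioo_subset_Icc_self.trans (hI.out ht.1 hs.1)
  have hnear : ∀ᶠ y in 𝓝 x, r < φ y ∧ y ∈ Ioo t s := by
    have hlsc_x := hlsc x (hIoo ⟨htx, hxs⟩) r hrx
    rw [nhdsWithin_eq_nhds.2 (mem_of_superset (Ioo_mem_nhds htx hxs) hIoo)] at hlsc_x
    exact hlsc_x.and (Ioo_mem_nhds htx hxs)
  obtain ⟨ε, hε, habove⟩ := (nhds_basis_Icc_pos x).eventually_iff.1 hnear
  have hxε : x - ε < x + ε := by linarith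
  obtain ⟨m, hm, hmin⟩ := (hlsc.mono fun y hy ↦ hIoo (habove hy).2).exists_isMinOn
    (nonempty_Icc.2 hxε.le) isCompact_Icc
  obtain ⟨hrm, htm, hms⟩ := habove hm
  rcases hm.2.lt_or_eq with hmq | rfl
  · obtain ⟨z, hz, hzm⟩ := hpc.exists_mem_Ioo_right_lt (hIoo ⟨htm, hms⟩) hs.1 hms
      (hs.2.trans_lt hrm) hmq
    exact (hmin ⟨hm.1.trans hz.1.le, hz.2.le⟩).not_gt hzm
  · obtain ⟨z, hz, hzm⟩ := hpc.exists_mem_Ioo_left_lt (hIoo ⟨htm, hms⟩) ht.1 htm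
      (ht.2.trans_lt hrm) hxε
    exact (hmin ⟨hz.1.le, hz.2.le⟩).not_gt hzm

theorem mem_argminSet_of_le {a t : ℝ} (ha : a ∈ ArgminSet φ I) (ht : t ∈ I) (hta : φ t ≤ φ a) :
    t ∈ ArgminSet φ I :=
  ⟨ht, fun s hs ↦ hta.trans (ha.2 s hs)⟩

variable (hI : I.OrdConnected) (hlsc : LowerSemicontinuousOn φ I) (hpc : PseudoconvexOn φ I)
include hI hlsc hpc

theorem PseudoconvexOn.strictMonoOn_upperBounds_argminSet (hne : (ArgminSet φ I).Nonempty) :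
    StrictMonoOn φ {t ∈ I | ∀ s ∈ ArgminSet φ I, s ≤ t} := by
  obtain ⟨a, ha⟩ := hne
  intro t₁ h₁ t₂ h₂ h12
  have hat₁ : a ≤ t₁ := h₁.2 a ha
  have hφa : φ a < φ t₂ :=
    lt_of_not_ge fun h ↦ (h₁.2 t₂ (mem_argminSet_of_le ha h₂.1 h)).not_gt h12
  obtain ⟨z, hz, hφz⟩ := hpc.exists_mem_Ioo_left_lt h₂.1 ha.1 (hat₁.trans_lt h12) hφa h12
  have hzI : z ∈ I := hI.out ha.1 h₂.1 ⟨hat₁.trans hz.1.le, hz.2.le⟩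
  have hφt₁ : φ t₁ ≤ φ z := ((hpc.quasiconvexOn hI hlsc (φ z)).ordConnected.out
    ⟨ha.1, ha.2 z hzI⟩ ⟨hzI, le_rfl⟩ ⟨hat₁, hz.1.le⟩).2
  exact hφt₁.trans_lt hφz

theorem PseudoconvexOn.strictAntiOn_lowerBounds_argminSet (hne : (ArgminSet φ I).Nonempty) :
    StrictAntiOn φ {t ∈ I | ∀ s ∈ ArgminSet φ I, t ≤ s} := by
  obtain ⟨a, ha⟩ := hne
  intro t₁ h₁ t₂ h₂ h12
  have ht₂a : t₂ ≤ a := h₂.2 a ha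
  have hφa : φ a < φ t₁ :=
    lt_of_not_ge fun h ↦ (h₂.2 t₁ (mem_argminSet_of_le ha h₁.1 h)).not_gt h12
  obtain ⟨z, hz, hφz⟩ := hpc.exists_mem_Ioo_right_lt h₁.1 ha.1 (h12.trans_le ht₂a) hφa h12
  have hzI : z ∈ I := hI.out h₁.1 ha.1 ⟨hz.1.le, hz.2.le.trans ht₂a⟩
  have hφt₂ : φ t₂ ≤ φ z := ((hpc.quasiconvexOn hI hlsc (φ z)).ordConnected.out
    ⟨hzI, le_rfl⟩ ⟨ha.1, ha.2 z hzI⟩ ⟨hz.2.le, ht₂a⟩).2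
  exact hφt₂.trans_lt hφz

end Pseudoconvex

theorem stmt5 (I : Set ℝ) (hI : I.OrdConnected) (φ : ℝ → ℝ)
    (hlsc : LowerSemicontinuousOn φ I) (hpc : PseudoconvexOn φ I)
    (hne : (ArgminSet φ I).Nonempty) :
    (∀ a ∈ ArgminSet φ I, ∀ b ∈ ArgminSet φ I, φ a = φ b) ∧
    StrictMonoOn φ {t ∈ I | ∀ s ∈ ArgminSet φ I, s ≤ t} ∧
    StrictAntiOn φ {t ∈ I | ∀ s ∈ ArgminSet φ I, t ≤ s} :=
  ⟨fun a ha b hb ↦ le_antisymm (ha.2 b hb.1) (hb.2 a ha.1),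
    hpc.strictMonoOn_upperBounds_argminSet hI hlsc hne,
    hpc.strictAntiOn_lowerBounds_argminSet hI hlsc hne⟩
end

section
/- Let φ : I → R be a lower semicontinuous function on an interval I ⊆ R that is pseudoconvex with respect to the lower Dini derivative, and suppose φ has no global minimizer on I. If there exist t₀ > t₁ in I with φ(t₀) > φ(t₁), then φ is strictly monotone increasing on all of I. -/
open Filter Set

open Topology

/-!
`dini φ s (t - s) < 0` means that `φ` takes values below `φ s` arbitrarily close to `s` on the
side of `t`, so a pseudoconvex `φ` has no one-sided local minimum facing a point of lower value.
With lower semicontinuity (minima on compact intervals exist) this makes `φ` quasiconvex. If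
`φ a > φ b` for some `a < b`, the minimum of `φ` on a compact interval containing `a, b, t₀, t₁`
is beaten by some point outside it (no global minimizer), and on either side this contradicts
quasiconvexity. So `φ` is monotone, and a flat piece `φ a = φ b` is ruled out by descending from
`b` towards a point of lower value, which must lie to its left.
-/

lemma frequently_neg_of_liminf_neg {α : Type*} {f : Filter α} {u : α → ℝ}
    (h : liminf u f < 0) : ∃ᶠ x in f, u x < 0 := by
  by_cases hu : IsCoboundedUnder (· ≥ ·) f u
  · exact frequently_lt_of_liminf_lt hu h
  · -- junk value: without a bound, `liminf` is the `sSup` of an unbounded set, i.e. `0`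
    have hunbdd : ¬BddAbove {a | ∀ᶠ x in f, a ≤ u x} :=
      fun ⟨b, hb⟩ => hu ⟨b, fun a ha => hb ha⟩
    rw [liminf_eq, Real.sSup_of_not_bddAbove hunbdd] at h
    exact absurd h (lt_irrefl 0)

namespace PseudoconvexOn

variable {φ : ℝ → ℝ} {I : Set ℝ} {s t : ℝ}

lemma frequently_lt (hpc : PseudoconvexOn φ I) (hs : s ∈ I) (ht : t ∈ I) (hlt : φ t < φ s) :
    ∃ᶠ h in 𝓝[>] (0 : ℝ), φ (s + h * (t - s)) < φ s := by
  have hquot := frequently_neg_of_liminf_neg (hpc s hs t ht hlt)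
  refine (hquot.and_eventually self_mem_nhdsWithin).mono fun h ⟨hneg, hpos⟩ => ?_
  exact sub_neg.1 (neg_of_div_neg_left hneg hpos.le)

lemma frequently_lt_nhdsGT (hpc : PseudoconvexOn φ I) (hs : s ∈ I) (ht : t ∈ I)
    (hlt : φ t < φ s) (hst : s < t) : ∃ᶠ w in 𝓝[>] s, φ w < φ s := by
  refine Tendsto.frequently ?_ (hpc.frequently_lt hs ht hlt)
  refine tendsto_nhdsWithin_iff.2 ⟨?_, ?_⟩
  · exact ((Continuous.tendsto' (by fun_prop) 0 s (by simp)).mono_left nhdsWithin_le_nhds)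
  · filter_upwards [self_mem_nhdsWithin] with h hh
    exact lt_add_of_pos_right s (mul_pos hh (sub_pos.2 hst))

lemma frequently_lt_nhdsLT (hpc : PseudoconvexOn φ I) (hs : s ∈ I) (ht : t ∈ I)
    (hlt : φ t < φ s) (hts : t < s) : ∃ᶠ w in 𝓝[<] s, φ w < φ s := by
  refine Tendsto.frequently ?_ (hpc.frequently_lt hs ht hlt)
  refine tendsto_nhdsWithin_iff.2 ⟨?_, ?_⟩
  · exact ((Continuous.tendsto' (by fun_prop) 0 s (by simp)).mono_left nhdsWithin_le_nhds)
  · filter_upwards [self_mem_nhdsWithin] with h hh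
    exact add_lt_of_neg_right s (mul_neg_of_pos_of_neg hh (sub_neg.2 hts))

lemma le_of_mem_Ioo (hpc : PseudoconvexOn φ I) (hI : I.OrdConnected)
    (hlsc : LowerSemicontinuousOn φ I) {x y z r : ℝ} (hx : x ∈ I) (hz : z ∈ I)
    (hy : y ∈ Ioo x z) (hxr : φ x ≤ r) (hzr : φ z ≤ r) : φ y ≤ r := by
  by_contra! hry
  have hIoo : Ioo x z ⊆ I := Ioo_subset_Icc_self.trans (hI.out hx hz)
  have hnhds : ∀ᶠ w in 𝓝 y, r < φ w := by
    have h := hlsc y (hIoo hy) r hry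
    rwa [nhdsWithin_eq_nhds.2 (mem_of_superset (Ioo_mem_nhds hy.1 hy.2) hIoo)] at h
  obtain ⟨u, v, -, hnhds_uv, huv⟩ :=
    exists_Icc_mem_subset_of_mem_nhds (hnhds.and (Ioo_mem_nhds hy.1 hy.2))
  obtain ⟨hyu, hyv⟩ := Icc_mem_nhds_iff.1 hnhds_uv
  have huvI : Icc u v ⊆ I := fun w hw => hIoo (huv hw).2
  obtain ⟨p, hp, hmin⟩ := (hlsc.mono huvI).exists_isMinOn
    (nonempty_Icc.2 (hyu.trans hyv).le) isCompact_Icc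
  obtain ⟨hrp, hxp, hpz⟩ := huv hp
  -- `p` minimizes `φ` on `[u, v]`, yet `φ` descends from `p` towards `z` and towards `x`
  rcases lt_or_ge p v with hpv | hvp
  · obtain ⟨w, hlt, hw⟩ := ((hpc.frequently_lt_nhdsGT (huvI hp) hz (hzr.trans_lt hrp)
      hpz).and_eventually (Ioo_mem_nhdsGT hpv)).exists
    exact (hmin ⟨hp.1.trans hw.1.le, hw.2.le⟩).not_gt hlt
  · obtain ⟨w, hlt, hw⟩ := ((hpc.frequently_lt_nhdsLT (huvI hp) hx (hxr.trans_lt hrp)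
      hxp).and_eventually (Ioo_mem_nhdsLT ((hyu.trans hyv).trans_le hvp))).exists
    exact (hmin ⟨hw.1.le, hw.2.le.trans hp.2⟩).not_gt hlt

lemma quasiconvexOn_s17 (hpc : PseudoconvexOn φ I) (hI : I.OrdConnected)
    (hlsc : LowerSemicontinuousOn φ I) : QuasiconvexOn ℝ I φ := fun _ =>
  convex_iff_ordConnected.2 <| ordConnected_of_Ioo fun _x hx _z hz _ _y hy =>
    ⟨hI.out hx.1 hz.1 (Ioo_subset_Icc_self hy), hpc.le_of_mem_Ioo hI hlsc hx.1 hz.1 hy hx.2 hz.2⟩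

lemma strictMonoOn_of_monotoneOn (hpc : PseudoconvexOn φ I) (hI : I.OrdConnected)
    (hmono : MonotoneOn φ I) (hnomin : ∀ t ∈ I, ∃ s ∈ I, φ s < φ t) : StrictMonoOn φ I := by
  intro a ha b hb hab
  refine (hmono ha hb hab.le).lt_of_ne fun heq => ?_
  obtain ⟨s, hs, hsb⟩ := hnomin b hb
  have hsb' : s < b := lt_of_not_ge fun hbs => (hmono hb hs hbs).not_gt hsb
  obtain ⟨w, hlt, hw⟩ :=
    ((hpc.frequently_lt_nhdsLT hb hs hsb hsb').and_eventually (Ioo_mem_nhdsLT hab)).exists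
  exact (hmono ha (hI.out ha hb (Ioo_subset_Icc_self hw)) hw.1.le).not_gt (heq ▸ hlt)

end PseudoconvexOn

namespace QuasiconvexOn

lemma le_max_of_mem_Icc {𝕜 β : Type*} [Field 𝕜] [LinearOrder 𝕜] [IsStrictOrderedRing 𝕜]
    [LinearOrder β] {s : Set 𝕜} {f : 𝕜 → β} (hf : QuasiconvexOn 𝕜 s f) {x y z : 𝕜}
    (hx : x ∈ s) (hz : z ∈ s) (hy : y ∈ Icc x z) : f y ≤ max (f x) (f z) :=
  ((convex_iff_ordConnected.1 (hf _)).out ⟨hx, le_max_left _ _⟩ ⟨hz, le_max_right _ _⟩ hy).2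

lemma monotoneOn_of_no_minimizer {I : Set ℝ} {φ : ℝ → ℝ} (hqc : QuasiconvexOn ℝ I φ)
    (hI : I.OrdConnected) (hlsc : LowerSemicontinuousOn φ I)
    (hnomin : ∀ t ∈ I, ∃ s ∈ I, φ s < φ t) {t₀ t₁ : ℝ} (ht₀ : t₀ ∈ I) (ht₁ : t₁ ∈ I)
    (h : t₁ < t₀) (hφ : φ t₁ < φ t₀) : MonotoneOn φ I := by
  intro a ha b hb hab
  by_contra! hba
  have hLR : Icc (min t₁ a) (max t₀ b) ⊆ I := hI.out
    (by rcases min_choice t₁ a with e | e <;> rw [e] <;> assumption)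
    (by rcases max_choice t₀ b with e | e <;> rw [e] <;> assumption)
  obtain ⟨m, hm, hmin⟩ := (hlsc.mono hLR).exists_isMinOn
    (nonempty_Icc.2 ((min_le_right _ _).trans (hab.trans (le_max_right _ _)))) isCompact_Icc
  obtain ⟨s, hs, hsm⟩ := hnomin m (hLR hm)
  have hs_out : ¬(min t₁ a ≤ s ∧ s ≤ max t₀ b) := fun hs' => (hmin hs').not_gt hsm
  rcases not_and_or.1 hs_out with hsa | hts
  · have hsa : s < a := (not_le.1 hsa).trans_le (min_le_right _ _)
    have hma : φ m ≤ φ a := hmin ⟨min_le_right _ _, hab.trans (le_max_right _ _)⟩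
    exact (hqc.le_max_of_mem_Icc hs hb ⟨hsa.le, hab⟩).not_gt (max_lt (hsm.trans_le hma) hba)
  · have hts : t₀ < s := (le_max_left _ _).trans_lt (not_le.1 hts)
    have hmt : φ m ≤ φ t₀ := hmin ⟨(min_le_left _ _).trans h.le, le_max_left _ _⟩
    exact (hqc.le_max_of_mem_Icc ht₁ hs ⟨h.le, hts.le⟩).not_gt (max_lt hφ (hsm.trans_le hmt))

end QuasiconvexOn

theorem stmt17 (I : Set ℝ) (hI : I.OrdConnected) (φ : ℝ → ℝ)
    (hlsc : LowerSemicontinuousOn φ I) (hpc : PseudoconvexOn φ I)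
    (hnomin : ∀ t ∈ I, ∃ s ∈ I, φ s < φ t)
    (t₀ t₁ : ℝ) (ht₀ : t₀ ∈ I) (ht₁ : t₁ ∈ I) (h : t₁ < t₀) (hφ : φ t₁ < φ t₀) :
    StrictMonoOn φ I :=
  hpc.strictMonoOn_of_monotoneOn hI
    ((hpc.quasiconvexOn_s17 hI hlsc).monotoneOn_of_no_minimizer hI hlsc hnomin ht₀ ht₁ h hφ) hnomin
end
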